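/- arXiv:2605.30535 — 6 statements merged into one kernel-verified Lean document; each statement's English description precedes it below -/
import Mathlib

section
/- Let p be a prime number and let B = ⟨a, s | sas⁻¹ = aᵖ⟩ be the solvable Baumslag–Solitar group BS(1,p). Let T ⊆ B be the set consisting of the elements s⁻ⁱ aʲ sᵏ for i, k > 0, 0 ≤ j < pⁱ with p ∤ j; the elements sᵏ for k ≥ 0; and the elements s⁻ⁱ aʲ for i ≥ 0 and 0 ≤ j < pⁱ. Then T is a right transversal of the cyclic subgroup ⟨a⟩ in B: every element of B lies in the right coset ⟨a⟩w for exactly one w ∈ T, and distinct parameter choices in the description of T yield elements lying in distinct right cosets of ⟨a⟩. -/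
/-!
Existence: every element of `BS(1,p)` is a word `s⁻ⁱ aᴶ sᵏ` with `J ∈ ℤ`, since such words are
closed under right multiplication by the generators. Dividing `J` by `pⁱ` pulls a power of `a` out
to the left and leaves `s⁻ⁱ aʳ sᵏ` with `0 ≤ r < pⁱ`; cancelling `s⁻¹ aᵖᵗ s = aᵗ` while `p ∣ r`
lands in `T`.

Uniqueness: `BS(1,p)` acts on `ℚ` by affine maps, `a` as `x ↦ x + 1` and `s` as `x ↦ p x`, so that
`s⁻ⁱ aʲ sᵏ` acts as `x ↦ (pᵏ x + j) / pⁱ`. Multiplying on the left by a power of `a` changes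
only the constant term, and by an integer; hence the slope `pᵏ⁻ⁱ` and the fractional part of
`j / pⁱ ∈ [0, 1)` are invariants of the coset, and they pin down `(i, j, k)` among the words in `T`.
-/

/-- Generators of the Baumslag–Solitar group `BS(1,p) = ⟨a, s | s a s⁻¹ = aᵖ⟩`. -/
inductive Gen
  | a | s

/-- Defining relator of `BS(1,p) = ⟨a, s | s a s⁻¹ = aᵖ⟩`. -/
def bsRels (p : ℕ) : Set (FreeGroup Gen) :=
  { FreeGroup.of Gen.s * FreeGroup.of Gen.a * (FreeGroup.of Gen.s)⁻¹ *
      ((FreeGroup.of Gen.a) ^ p)⁻¹ }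

/-- The generator `a` of `BS(1,p)`. -/
def aBS (p : ℕ) : PresentedGroup (bsRels p) := PresentedGroup.of Gen.a

/-- The generator `s` of `BS(1,p)`. -/
def sBS (p : ℕ) : PresentedGroup (bsRels p) := PresentedGroup.of Gen.s

/-- The set `T`: elements `s⁻ⁱ aʲ sᵏ` with `i, k > 0`, `0 ≤ j < pⁱ`, `p ∤ j`;
elements `sᵏ` with `k ≥ 0`; and elements `s⁻ⁱ aʲ` with `i ≥ 0`, `0 ≤ j < pⁱ`. -/
def TBS (p : ℕ) : Set (PresentedGroup (bsRels p)) :=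
  { w | ∃ i k j : ℕ, 0 < i ∧ 0 < k ∧ j < p ^ i ∧ ¬ p ∣ j ∧
      w = (sBS p ^ i)⁻¹ * aBS p ^ j * sBS p ^ k } ∪
  { w | ∃ k : ℕ, w = sBS p ^ k } ∪
  { w | ∃ i j : ℕ, j < p ^ i ∧ w = (sBS p ^ i)⁻¹ * aBS p ^ j }

theorem pow_mul_zpow_of_conj_eq_zpow {G : Type*} [Group G] {a s : G} {p : ℤ}
    (h : s * a * s⁻¹ = a ^ p) (k : ℕ) (n : ℤ) : s ^ k * a ^ n = a ^ (p ^ k * n) * s ^ k := by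
  have hs : ∀ n : ℤ, s * a ^ n = a ^ (p * n) * s := fun n => by
    rw [← mul_inv_eq_iff_eq_mul, ← conj_zpow, h, ← zpow_mul]
  induction k generalizing n with
  | zero => simp
  | succ k ih =>
    calc s ^ (k + 1) * a ^ n = s ^ k * (s * a ^ n) := by rw [pow_succ, mul_assoc]
      _ = a ^ (p ^ k * (p * n)) * s ^ (k + 1) := by rw [hs, ← mul_assoc, ih, mul_assoc, pow_succ]
      _ = a ^ (p ^ (k + 1) * n) * s ^ (k + 1) := by rw [pow_succ p, mul_assoc]

section Relations

variable (p : ℕ)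

theorem sBS_mul_aBS_mul_inv : sBS p * aBS p * (sBS p)⁻¹ = aBS p ^ (p : ℤ) := by
  have h : PresentedGroup.mk (bsRels p) (FreeGroup.of Gen.s * FreeGroup.of Gen.a *
      (FreeGroup.of Gen.s)⁻¹ * (FreeGroup.of Gen.a ^ p)⁻¹) = 1 :=
    (QuotientGroup.eq_one_iff _).mpr (Subgroup.subset_normalClosure rfl)
  rw [map_mul, map_inv, map_pow, mul_inv_eq_one] at h
  rwa [zpow_natCast]

theorem sBS_pow_mul_aBS_zpow (k : ℕ) (n : ℤ) :
    sBS p ^ k * aBS p ^ n = aBS p ^ ((p : ℤ) ^ k * n) * sBS p ^ k :=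
  pow_mul_zpow_of_conj_eq_zpow (sBS_mul_aBS_mul_inv p) k n

theorem aBS_zpow_mul_inv_sBS (n : ℤ) :
    aBS p ^ n * (sBS p)⁻¹ = (sBS p)⁻¹ * aBS p ^ ((p : ℤ) * n) := by
  have h := sBS_pow_mul_aBS_zpow p 1 n
  rw [pow_one, pow_one] at h
  rw [eq_inv_mul_iff_mul_eq, ← mul_assoc, h, mul_inv_cancel_right]

theorem inv_sBS_mul_aBS_pow_mul_sBS (t : ℕ) :
    (sBS p)⁻¹ * aBS p ^ (p * t) * sBS p = aBS p ^ t := by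
  have h := sBS_pow_mul_aBS_zpow p 1 t
  rw [pow_one, pow_one, zpow_natCast, ← Int.natCast_mul, zpow_natCast] at h
  rw [mul_assoc, inv_mul_eq_iff_eq_mul, h]

end Relations

section

variable {p : ℕ}

theorem exists_eq_inv_sBS_pow_mul_aBS_zpow_mul_sBS_pow (g : PresentedGroup (bsRels p)) :
    ∃ (i k : ℕ) (J : ℤ), g = (sBS p ^ i)⁻¹ * aBS p ^ J * sBS p ^ k := by
  have hg : g ∈ Subgroup.closure (Set.range PresentedGroup.of) := by simp
  have mul_aBS_zpow (i k : ℕ) (J n : ℤ) : (sBS p ^ i)⁻¹ * aBS p ^ J * sBS p ^ k * aBS p ^ n =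
      (sBS p ^ i)⁻¹ * aBS p ^ (J + p ^ k * n) * sBS p ^ k := by
    rw [mul_assoc, sBS_pow_mul_aBS_zpow, ← mul_assoc, mul_assoc _ (aBS p ^ J), ← zpow_add]
  induction hg using Subgroup.closure_induction_right with
  | one => exact ⟨0, 0, 0, by simp⟩
  | mul_right x _ y hy ih =>
    obtain ⟨⟨⟩ | ⟨⟩, rfl⟩ := hy <;> obtain ⟨i, k, J, rfl⟩ := ih
    · exact ⟨i, k, J + p ^ k, by rw [← mul_one ((p : ℤ) ^ k), ← mul_aBS_zpow, zpow_one]; rfl⟩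
    · exact ⟨i, k + 1, J, by rw [pow_succ, ← mul_assoc]; rfl⟩
  | mul_inv_cancel x _ y hy ih =>
    obtain ⟨⟨⟩ | ⟨⟩, rfl⟩ := hy <;> obtain ⟨i, k, J, rfl⟩ := ih
    · exact ⟨i, k, J - p ^ k, by
        rw [sub_eq_add_neg, ← mul_neg_one, ← mul_aBS_zpow, zpow_neg_one]; rfl⟩
    · rcases k with _ | k
      · refine ⟨i + 1, 0, p * J, ?_⟩
        rw [pow_zero, mul_one, mul_one, pow_succ', mul_inv_rev, mul_assoc, mul_assoc]
        exact congrArg _ (aBS_zpow_mul_inv_sBS p J)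
      · exact ⟨i, k, J, by rw [pow_succ, ← mul_assoc]; exact (mul_inv_cancel_right _ _)⟩

theorem mem_TBS_of_lt {i j : ℕ} (k : ℕ) (h : j < p ^ i) :
    (sBS p ^ i)⁻¹ * aBS p ^ j * sBS p ^ k ∈ TBS p := by
  induction k generalizing i j with
  | zero => exact Or.inr ⟨i, j, h, by simp⟩
  | succ k ih =>
    rcases i with _ | i
    · obtain rfl : j = 0 := by simpa using h
      exact Or.inl (Or.inr ⟨k + 1, by simp⟩)
    by_cases hpj : p ∣ j
    · obtain ⟨t, rfl⟩ := hpj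
      have ht : t < p ^ i := Nat.lt_of_mul_lt_mul_left (by rwa [← pow_succ'])
      convert ih ht using 1
      rw [pow_succ' _ i, pow_succ' _ k, mul_inv_rev, ← inv_sBS_mul_aBS_pow_mul_sBS p t]
      group
    · exact Or.inl (Or.inl ⟨i + 1, k + 1, j, i.succ_pos, k.succ_pos, h, hpj, rfl⟩)

theorem exists_mem_TBS_mul_inv_mem_zpowers (hp : 0 < p) (g : PresentedGroup (bsRels p)) :
    ∃ w ∈ TBS p, g * w⁻¹ ∈ Subgroup.zpowers (aBS p) := by
  obtain ⟨i, k, J, rfl⟩ := exists_eq_inv_sBS_pow_mul_aBS_zpow_mul_sBS_pow g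
  have hpi : (0 : ℤ) < (p : ℤ) ^ i := by positivity
  lift J % (p : ℤ) ^ i to ℕ using Int.emod_nonneg J hpi.ne' with r hr
  have hrlt : r < p ^ i := by
    have := Int.emod_lt_of_pos J hpi
    rw [← hr] at this
    exact_mod_cast this
  set q := J / (p : ℤ) ^ i
  have hJ : J = (p : ℤ) ^ i * q + r := by rw [hr, Int.mul_ediv_add_emod]
  refine ⟨_, mem_TBS_of_lt k hrlt, Subgroup.mem_zpowers_iff.mpr ⟨q, ?_⟩⟩
  calc aBS p ^ q = (sBS p ^ i)⁻¹ * aBS p ^ ((p : ℤ) ^ i * q) * sBS p ^ i := by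
        rw [mul_assoc, ← sBS_pow_mul_aBS_zpow, inv_mul_cancel_left]
    _ = _ := by rw [hJ]; group

section AffineModel

variable (hp : p ≠ 0)

def bsPerm : PresentedGroup (bsRels p) →* Equiv.Perm ℚ :=
  PresentedGroup.toGroup (f := fun
    | .a => Equiv.addRight 1
    | .s => Equiv.mulRight₀ (p : ℚ) (Nat.cast_ne_zero.mpr hp)) <| by
    rintro _ rfl
    ext x
    have : (p : ℚ) ≠ 0 := Nat.cast_ne_zero.mpr hp
    simp only [map_mul, FreeGroup.lift_apply_of, map_inv, map_pow, Equiv.nsmul_addRight,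
      nsmul_eq_mul, mul_one, Equiv.neg_addRight, Equiv.Perm.mul_apply, Equiv.coe_addRight,
      Equiv.Perm.coe_inv, Equiv.mulRight₀_symm_apply, Equiv.mulRight₀_apply, Equiv.Perm.coe_one,
      id_eq]
    field_simp
    ring

theorem bsPerm_aBS_zpow_apply (n : ℤ) (x : ℚ) : bsPerm hp (aBS p ^ n) x = x + n := by
  simp [bsPerm, aBS]

theorem bsPerm_sBS_pow_apply (k : ℕ) (x : ℚ) : bsPerm hp (sBS p ^ k) x = x * p ^ k := by
  induction k generalizing x with
  | zero => simp
  | succ k ih =>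
    rw [pow_succ, map_mul, Equiv.Perm.mul_apply, ih, pow_succ]
    simp only [bsPerm, sBS, PresentedGroup.toGroup.of, Equiv.mulRight₀_apply]
    ring

theorem bsPerm_apply (i j k : ℕ) (x : ℚ) :
    bsPerm hp ((sBS p ^ i)⁻¹ * aBS p ^ j * sBS p ^ k) x = (x * p ^ k + j) / p ^ i := by
  rw [map_mul, map_mul, Equiv.Perm.mul_apply, Equiv.Perm.mul_apply, map_inv,
    Equiv.Perm.inv_eq_iff_eq, bsPerm_sBS_pow_apply, ← zpow_natCast, bsPerm_aBS_zpow_apply,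
    bsPerm_sBS_pow_apply]
  have : (p : ℚ) ^ i ≠ 0 := by positivity
  field_simp
  push_cast; ring

end AffineModel

theorem exists_reduced_of_mem_TBS {w : PresentedGroup (bsRels p)} (hw : w ∈ TBS p) :
    ∃ i j k : ℕ, j < p ^ i ∧ (0 < i → 0 < k → ¬ p ∣ j) ∧
      w = (sBS p ^ i)⁻¹ * aBS p ^ j * sBS p ^ k := by
  rcases hw with (⟨i, k, j, -, -, hj, hpj, rfl⟩ | ⟨k, rfl⟩) | ⟨i, j, hj, rfl⟩
  · exact ⟨i, j, k, hj, fun _ _ => hpj, rfl⟩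
  · exact ⟨0, 0, k, by simp, by simp, by simp⟩
  · exact ⟨i, j, 0, hj, by simp, by simp⟩

theorem mul_pow_eq_mul_pow_of_div_pow_eq_div_pow_add_int {i₁ i₂ j₁ j₂ : ℕ} {m : ℤ}
    (h₁ : j₁ < p ^ i₁) (h₂ : j₂ < p ^ i₂) (h : (j₁ : ℚ) / p ^ i₁ = j₂ / p ^ i₂ + m) :
    j₁ * p ^ i₂ = j₂ * p ^ i₁ := by
  have hpos {i j : ℕ} (hj : j < p ^ i) : (0 : ℚ) < p ^ i := by
    exact_mod_cast Nat.zero_lt_of_lt hj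
  have fract_eq {i j : ℕ} (hj : j < p ^ i) : Int.fract ((j : ℚ) / p ^ i) = j / p ^ i := by
    rw [Int.fract_eq_self, div_lt_one (hpos hj)]
    exact ⟨by positivity, by exact_mod_cast hj⟩
  have := congrArg Int.fract h
  rw [Int.fract_add_intCast, fract_eq h₁, fract_eq h₂,
    div_eq_div_iff (hpos h₁).ne' (hpos h₂).ne'] at this
  exact_mod_cast this

theorem add_eq_add_of_pow_div_pow_eq (hp : 1 < p) {i₁ i₂ k₁ k₂ : ℕ}
    (h : (p : ℚ) ^ k₁ / p ^ i₁ = p ^ k₂ / p ^ i₂) : k₁ + i₂ = k₂ + i₁ := by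
  have hp0 : (p : ℚ) ≠ 0 := by positivity
  rw [div_eq_div_iff (by positivity) (by positivity), ← pow_add, ← pow_add] at h
  exact Nat.pow_right_injective hp (by exact_mod_cast h)

theorem le_of_mul_pow_eq_of_add_eq (hp : 0 < p) {i₁ i₂ j₁ j₂ k₁ k₂ : ℕ}
    (hj : j₁ * p ^ i₂ = j₂ * p ^ i₁) (hk : k₁ + i₂ = k₂ + i₁) (hr : 0 < i₂ → 0 < k₂ → ¬ p ∣ j₂) :
    i₂ ≤ i₁ := by
  by_contra! hlt
  refine hr (by omega) (by omega) ⟨j₁ * p ^ (i₂ - i₁ - 1), ?_⟩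
  have hi₂ : p ^ i₂ = p * p ^ (i₂ - i₁ - 1) * p ^ i₁ := by
    rw [← pow_succ', ← pow_add]; congr 1; omega
  apply Nat.eq_of_mul_eq_mul_right (pow_pos hp i₁)
  rw [← hj, hi₂]; ring

theorem eq_of_mem_TBS_of_mul_inv_mem_zpowers (hp : 1 < p) {w₁ w₂ : PresentedGroup (bsRels p)}
    (h₁ : w₁ ∈ TBS p) (h₂ : w₂ ∈ TBS p) (h : w₁ * w₂⁻¹ ∈ Subgroup.zpowers (aBS p)) :
    w₁ = w₂ := by
  obtain ⟨m, hm⟩ := Subgroup.mem_zpowers_iff.mp h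
  obtain ⟨i₁, j₁, k₁, hj₁, hr₁, rfl⟩ := exists_reduced_of_mem_TBS h₁
  obtain ⟨i₂, j₂, k₂, hj₂, hr₂, rfl⟩ := exists_reduced_of_mem_TBS h₂
  have hp0 : p ≠ 0 := by omega
  have hw (x : ℚ) : x * p ^ k₁ / p ^ i₁ + j₁ / p ^ i₁ = x * p ^ k₂ / p ^ i₂ + j₂ / p ^ i₂ + m := by
    rw [← add_div, ← add_div, ← bsPerm_apply hp0, eq_mul_of_mul_inv_eq hm.symm, map_mul,
      Equiv.Perm.mul_apply, bsPerm_apply, bsPerm_aBS_zpow_apply]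
  have hfrac : (j₁ : ℚ) / p ^ i₁ = j₂ / p ^ i₂ + m := by simpa using hw 0
  have hslope : (p : ℚ) ^ k₁ / p ^ i₁ = p ^ k₂ / p ^ i₂ := by
    have h1 := hw 1
    simp only [one_mul] at h1
    linarith
  have hj := mul_pow_eq_mul_pow_of_div_pow_eq_div_pow_add_int hj₁ hj₂ hfrac
  have hk := add_eq_add_of_pow_div_pow_eq hp hslope
  obtain rfl : i₁ = i₂ := le_antisymm (le_of_mul_pow_eq_of_add_eq (by omega) hj.symm hk.symm hr₁)
    (le_of_mul_pow_eq_of_add_eq (by omega) hj hk hr₂)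
  obtain rfl : j₁ = j₂ := Nat.eq_of_mul_eq_mul_right (pow_pos (by omega) i₁) hj
  obtain rfl : k₁ = k₂ := by omega
  rfl

end

/-- `T` is a right transversal of `⟨a⟩` in `BS(1,p)`: every element lies in the
right coset `⟨a⟩ w` of exactly one `w ∈ T`.  (In particular distinct elements of
`T` lie in distinct right cosets of `⟨a⟩`.) -/
theorem TBS_is_right_transversal (p : ℕ) (hp : p.Prime) :
    ∀ g : PresentedGroup (bsRels p),
      ∃! w : PresentedGroup (bsRels p),
        w ∈ TBS p ∧ g * w⁻¹ ∈ Subgroup.zpowers (aBS p) := by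
  intro g
  obtain ⟨w, hw, hgw⟩ := exists_mem_TBS_mul_inv_mem_zpowers hp.pos g
  refine ⟨w, ⟨hw, hgw⟩, fun w' ⟨hw', hgw'⟩ => ?_⟩
  apply eq_of_mem_TBS_of_mul_inv_mem_zpowers hp.one_lt hw' hw
  simpa [mul_assoc] using mul_mem (inv_mem hgw') hgw
end

section
/- There is a group isomorphism Θ from K = ⟨a, b, s | sas⁻¹ = ab, sbs⁻¹ = b⟩ to G = ⟨c, q | c(qcq⁻¹) = (qcq⁻¹)c⟩ satisfying Θ(a) = cq⁻¹, Θ(b) = qcq⁻¹c⁻¹, and Θ(s) = c. -/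
/-- Generators of `K = ⟨a, b, s | s a s⁻¹ = ab, s b s⁻¹ = b⟩`. -/
inductive GenK
  | a | b | s

/-- Generators of `G = ⟨c, q | c(qcq⁻¹) = (qcq⁻¹)c⟩`. -/
inductive GenG
  | c | q

/-- Relators of `K = ⟨a, b, s | s a s⁻¹ = ab, s b s⁻¹ = b⟩`. -/
def relsK : Set (FreeGroup GenK) :=
  { FreeGroup.of GenK.s * FreeGroup.of GenK.a * (FreeGroup.of GenK.s)⁻¹ *
      (FreeGroup.of GenK.a * FreeGroup.of GenK.b)⁻¹,
    FreeGroup.of GenK.s * FreeGroup.of GenK.b * (FreeGroup.of GenK.s)⁻¹ *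
      (FreeGroup.of GenK.b)⁻¹ }

/-- Relator of the Burns–Karrass–Solitar group `G = ⟨c, q | c(qcq⁻¹) = (qcq⁻¹)c⟩`. -/
def relsG : Set (FreeGroup GenG) :=
  { FreeGroup.of GenG.c *
      (FreeGroup.of GenG.q * FreeGroup.of GenG.c * (FreeGroup.of GenG.q)⁻¹) *
      ((FreeGroup.of GenG.q * FreeGroup.of GenG.c * (FreeGroup.of GenG.q)⁻¹) *
        FreeGroup.of GenG.c)⁻¹ }

/-
Θ is inverted on generators by c ↦ s, q ↦ a⁻¹s, as a = cq⁻¹ forces. Apart from free-group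
identities, the only relations to check are commutations: Θ respects sbs⁻¹ = b because c commutes
with qcq⁻¹; conversely qcq⁻¹ ↦ a⁻¹sa = bs, so the BKS relator maps to s(bs) = (bs)s, which holds
because s commutes with b. Both composites then fix the generators.
-/

namespace PresentedGroup

variable {α β : Type*} {rels : Set (FreeGroup α)} {rels' : Set (FreeGroup β)}

lemma lift_of_eq_of_mul_inv_mem {x y : FreeGroup α} (h : x * y⁻¹ ∈ rels) :
    FreeGroup.lift of x = (FreeGroup.lift of y : PresentedGroup rels) := by
  have : (FreeGroup.lift of : FreeGroup α →* PresentedGroup rels) = mk rels := by ext; rfl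
  rw [this]
  exact mk_eq_mk_of_mul_inv_mem h

def equivOfGenerators (f : α → PresentedGroup rels') (g : β → PresentedGroup rels)
    (hf : ∀ r ∈ rels, FreeGroup.lift f r = 1) (hg : ∀ r ∈ rels', FreeGroup.lift g r = 1)
    (hgf : ∀ x, toGroup hg (f x) = of x) (hfg : ∀ y, toGroup hf (g y) = of y) :
    PresentedGroup rels ≃* PresentedGroup rels' :=
  (toGroup hf).toMulEquiv (toGroup hg) (ext fun x => by simp [hgf]) (ext fun y => by simp [hfg])

@[simp]
lemma equivOfGenerators_of (f : α → PresentedGroup rels') (g : β → PresentedGroup rels)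
    (hf : ∀ r ∈ rels, FreeGroup.lift f r = 1) (hg : ∀ r ∈ rels', FreeGroup.lift g r = 1)
    (hgf : ∀ x, toGroup hg (f x) = of x) (hfg : ∀ y, toGroup hf (g y) = of y) (x : α) :
    equivOfGenerators f g hf hg hgf hfg (of x) = f x :=
  toGroup.of hf

end PresentedGroup

open PresentedGroup

section

local notation "a" => (of GenK.a : PresentedGroup relsK)
local notation "b" => (of GenK.b : PresentedGroup relsK)
local notation "s" => (of GenK.s : PresentedGroup relsK)
local notation "c" => (of GenG.c : PresentedGroup relsG)
local notation "q" => (of GenG.q : PresentedGroup relsG)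

lemma relsK_conj_a : s * a * s⁻¹ = a * b := by
  simpa using lift_of_eq_of_mul_inv_mem (rels := relsK) (Or.inl rfl)

lemma relsK_commute_s_b : s * b = b * s := by
  simpa [mul_inv_eq_iff_eq_mul] using lift_of_eq_of_mul_inv_mem (rels := relsK) (Or.inr rfl)

lemma relsG_commute : c * (q * c * q⁻¹) = q * c * q⁻¹ * c := by
  simpa using lift_of_eq_of_mul_inv_mem (rels := relsG) rfl

lemma inv_a_mul_s_mul_a : a⁻¹ * s * a = b * s := by
  calc a⁻¹ * s * a = a⁻¹ * (s * a * s⁻¹) * s := by group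
    _ = b * s := by rw [relsK_conj_a]; group

def genKToG : GenK → PresentedGroup relsG
  | .a => c * q⁻¹
  | .b => q * c * q⁻¹ * c⁻¹
  | .s => c

def genGToK : GenG → PresentedGroup relsK
  | .c => s
  | .q => a⁻¹ * s

lemma lift_genKToG_relsK : ∀ r ∈ relsK, FreeGroup.lift genKToG r = 1 := by
  rintro r (rfl | rfl) <;> simp only [map_mul, map_inv, FreeGroup.lift_apply_of, genKToG]
  · group
  · calc _ = c * (q * c * q⁻¹) * c⁻¹ * c⁻¹ * (q * c * q⁻¹ * c⁻¹)⁻¹ := by group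
      _ = 1 := by rw [relsG_commute]; group

lemma lift_genGToK_relsG : ∀ r ∈ relsG, FreeGroup.lift genGToK r = 1 := by
  rintro r rfl
  simp only [map_mul, map_inv, FreeGroup.lift_apply_of, genGToK]
  calc _ = s * (a⁻¹ * s * a) * (a⁻¹ * s * a * s)⁻¹ := by group
    _ = 1 := by rw [inv_a_mul_s_mul_a, ← mul_assoc, relsK_commute_s_b]; group

lemma toGroup_genKToG_genGToK (x : GenK) :
    toGroup lift_genGToK_relsG (genKToG x) = of x := by
  cases x <;> simp only [genKToG, map_mul, map_inv, toGroup.of, genGToK]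
  · group
  · calc _ = a⁻¹ * s * a * s⁻¹ := by group
      _ = b := by rw [inv_a_mul_s_mul_a]; group

lemma toGroup_genGToK_genKToG (y : GenG) :
    toGroup lift_genKToG_relsK (genGToK y) = of y := by
  cases y <;> simp only [genGToK, map_mul, map_inv, toGroup.of, genKToG]
  group

end

/-- There is an isomorphism `Θ : K ≃ G` with `Θ(a) = cq⁻¹`, `Θ(b) = qcq⁻¹c⁻¹`,
`Θ(s) = c`. -/
theorem K_iso_G :
    ∃ Θ : PresentedGroup relsK ≃* PresentedGroup relsG,
      Θ (PresentedGroup.of GenK.a) =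
        PresentedGroup.of GenG.c * (PresentedGroup.of GenG.q)⁻¹ ∧
      Θ (PresentedGroup.of GenK.b) =
        PresentedGroup.of GenG.q * PresentedGroup.of GenG.c *
          (PresentedGroup.of GenG.q)⁻¹ * (PresentedGroup.of GenG.c)⁻¹ ∧
      Θ (PresentedGroup.of GenK.s) = PresentedGroup.of GenG.c :=
  ⟨equivOfGenerators genKToG genGToK lift_genKToG_relsK lift_genGToK_relsG
      toGroup_genKToG_genGToK toGroup_genGToK_genKToG,
    equivOfGenerators_of .., equivOfGenerators_of .., equivOfGenerators_of ..⟩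
end

section
/- Let G = ⟨c, q | c(qcq⁻¹) = (qcq⁻¹)c⟩ and for each i ∈ ℤ set cᵢ = qⁱ c q⁻ⁱ. Then the homomorphism from the right-angled Artin group on the infinite line A = ⟨xᵢ (i ∈ ℤ) | xᵢ x_{i+1} = x_{i+1} xᵢ (i ∈ ℤ)⟩ to G sending xᵢ ↦ cᵢ is injective; in particular the subgroup of G generated by {cᵢ : i ∈ ℤ} is isomorphic to A. -/
open scoped commutatorElement

/-- Relators of the right-angled Artin group on the infinite line:
`⟨xᵢ (i ∈ ℤ) | xᵢ x_{i+1} = x_{i+1} xᵢ⟩`. -/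
def raagLineRels : Set (FreeGroup ℤ) :=
  { r | ∃ i : ℤ, r = ⁅FreeGroup.of i, FreeGroup.of (i + 1)⁆ }

/-- The element `cᵢ = qⁱ c q⁻ⁱ` of `G`. -/
def cElt (i : ℤ) : PresentedGroup relsG :=
  (PresentedGroup.of GenG.q : PresentedGroup relsG) ^ i * PresentedGroup.of GenG.c *
    (PresentedGroup.of GenG.q : PresentedGroup relsG) ^ (-i)

/-!
Let `A` be the right-angled Artin group on the line and let `ℤ` act on `A` by shifting indices,
`xᵢ ↦ x_{i+k}`. In `A ⋊ ℤ` the elements `x₀` and the generator `t` of `ℤ` satisfy the defining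
relation of `G`, since `t x₀ t⁻¹ = x₁` commutes with `x₀`; so `c ↦ x₀`, `q ↦ t` defines a
homomorphism `G → A ⋊ ℤ`, which sends `cᵢ = qⁱ c q⁻ⁱ` to `tⁱ x₀ t⁻ⁱ = xᵢ`. Composed with
`A → G`, `xᵢ ↦ cᵢ`, it is therefore the canonical inclusion of `A`, which is injective.
-/

theorem PresentedGroup.range_toGroup_eq_closure {α G : Type*} [Group G]
    {rels : Set (FreeGroup α)} {f : α → G} (h : ∀ r ∈ rels, FreeGroup.lift f r = 1) :
    (PresentedGroup.toGroup h).range = Subgroup.closure (Set.range f) := by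
  rw [MonoidHom.range_eq_map, ← PresentedGroup.closure_range_of, MonoidHom.map_closure,
    ← Set.range_comp]
  congr 2
  exact funext fun _ => PresentedGroup.toGroup.of h

theorem Commute.conj_zpow {G : Type*} [Group G] {a b : G} (h : Commute a (b * a * b⁻¹))
    (i : ℤ) : Commute (b ^ i * a * b ^ (-i)) (b ^ (i + 1) * a * b ^ (-(i + 1))) := by
  have := h.map (MulAut.conj (b ^ i)).toMonoidHom
  simp only [MulEquiv.coe_toMonoidHom, MulAut.conj_apply] at this
  convert this using 1 <;> group

section RaagLine

variable {H : Type*} [Group H]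

theorem raagLine_commute_of (i : ℤ) :
    Commute (PresentedGroup.of i : PresentedGroup raagLineRels) (PresentedGroup.of (i + 1)) := by
  rw [← commutatorElement_eq_one_iff_commute,
    ← PresentedGroup.one_of_mem (rels := raagLineRels) ⟨i, rfl⟩, map_commutatorElement]
  rfl

def raagLineLift (g : ℤ → H) (hg : ∀ i, Commute (g i) (g (i + 1))) :
    PresentedGroup raagLineRels →* H :=
  PresentedGroup.toGroup (f := g) <| by
    rintro _ ⟨i, rfl⟩
    rw [map_commutatorElement, commutatorElement_eq_one_iff_commute]
    simpa using hg i

@[simp]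
theorem raagLineLift_of (g : ℤ → H) (hg : ∀ i, Commute (g i) (g (i + 1))) (i : ℤ) :
    raagLineLift g hg (PresentedGroup.of i) = g i :=
  PresentedGroup.toGroup.of _

theorem range_raagLineLift (g : ℤ → H) (hg : ∀ i, Commute (g i) (g (i + 1))) :
    (raagLineLift g hg).range = Subgroup.closure (Set.range g) :=
  PresentedGroup.range_toGroup_eq_closure _

def raagLineShiftHom (k : ℤ) : PresentedGroup raagLineRels →* PresentedGroup raagLineRels :=
  raagLineLift (fun i => PresentedGroup.of (i + k)) fun i => by
    simpa [add_right_comm] using raagLine_commute_of (i + k)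

def raagLineShift : Multiplicative ℤ →* MulAut (PresentedGroup raagLineRels) where
  toFun k := MonoidHom.toMulEquiv (raagLineShiftHom k.toAdd) (raagLineShiftHom (-k.toAdd))
    (PresentedGroup.ext fun i => by simp [raagLineShiftHom])
    (PresentedGroup.ext fun i => by simp [raagLineShiftHom])
  map_one' := MulEquiv.toMonoidHom_injective <| PresentedGroup.ext fun i => by
    simp [raagLineShiftHom]
  map_mul' k l := MulEquiv.toMonoidHom_injective <| PresentedGroup.ext fun i => by
    simp only [raagLineShiftHom, MulEquiv.coe_toMonoidHom, MonoidHom.toMulEquiv_apply, toAdd_mul,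
      MulAut.mul_apply, raagLineLift_of]
    congr 1
    ring

@[simp]
theorem raagLineShift_of (k i : ℤ) :
    raagLineShift (Multiplicative.ofAdd k) (PresentedGroup.of i) = PresentedGroup.of (i + k) := by
  simp [raagLineShift, raagLineShiftHom]

end RaagLine

theorem SemidirectProduct.inr_mul_inl_mul_inr_inv {N G : Type*} [Group N] [Group G]
    {φ : G →* MulAut N} (g : G) (n : N) :
    (inr g * inl n * (inr g)⁻¹ : N ⋊[φ] G) = inl (φ g n) := by
  rw [← map_inv, inl_aut]

section BKS

variable {H : Type*} [Group H]

theorem commute_c_conj_q :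
    Commute (PresentedGroup.of GenG.c : PresentedGroup relsG)
      (PresentedGroup.of GenG.q * PresentedGroup.of GenG.c * (PresentedGroup.of GenG.q)⁻¹) := by
  have := PresentedGroup.one_of_mem (rels := relsG) rfl
  simp only [map_mul, map_inv, mul_inv_eq_one] at this
  exact this

theorem commute_cElt (i : ℤ) : Commute (cElt i) (cElt (i + 1)) :=
  commute_c_conj_q.conj_zpow i

def bksLift (a b : H) (h : Commute a (b * a * b⁻¹)) : PresentedGroup relsG →* H :=
  PresentedGroup.toGroup (f := fun | .c => a | .q => b) <| by
    rintro _ rfl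
    simp only [map_mul, map_inv, FreeGroup.lift_apply_of]
    exact mul_inv_eq_one.mpr h.eq

theorem bksLift_cElt (a b : H) (h : Commute a (b * a * b⁻¹)) (i : ℤ) :
    bksLift a b h (cElt i) = b ^ i * a * b ^ (-i) := by
  simp [cElt, bksLift, PresentedGroup.toGroup.of]

end BKS

def bksToSemidirect :
    PresentedGroup relsG →* PresentedGroup raagLineRels ⋊[raagLineShift] Multiplicative ℤ :=
  bksLift (.inl (PresentedGroup.of 0)) (.inr (.ofAdd 1)) <| by
    simpa [SemidirectProduct.inr_mul_inl_mul_inr_inv] using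
      (raagLine_commute_of 0).map SemidirectProduct.inl

theorem bksToSemidirect_cElt (i : ℤ) :
    bksToSemidirect (cElt i) = .inl (PresentedGroup.of i) := by
  simp [bksToSemidirect, bksLift_cElt, ← map_zpow, ← ofAdd_zsmul,
    SemidirectProduct.inr_mul_inl_mul_inr_inv]

theorem raagLineLift_cElt_injective : Function.Injective (raagLineLift cElt commute_cElt) := by
  have : bksToSemidirect.comp (raagLineLift cElt commute_cElt) = SemidirectProduct.inl :=
    PresentedGroup.ext fun i => by simp [bksToSemidirect_cElt]
  refine Function.Injective.of_comp (f := bksToSemidirect) ?_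
  rw [← MonoidHom.coe_comp, this]
  exact SemidirectProduct.inl_injective

/-- The homomorphism from the RAAG on the infinite line to `G` sending `xᵢ ↦ cᵢ` is
injective; in particular the subgroup of `G` generated by the `cᵢ` is isomorphic to
that RAAG (it is the image of this injective homomorphism). -/
theorem raag_line_embeds :
    ∃ φ : PresentedGroup raagLineRels →* PresentedGroup relsG,
      (∀ i : ℤ, φ (PresentedGroup.of i) = cElt i) ∧
      Function.Injective φ ∧
      φ.range = Subgroup.closure (Set.range cElt) :=
  ⟨raagLineLift cElt commute_cElt, raagLineLift_of _ _, raagLineLift_cElt_injective,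
    range_raagLineLift _ _⟩
end

section
/- Let K = ⟨a, b, s | sas⁻¹ = ab, sbs⁻¹ = b⟩. Then the centraliser of s in K is the subgroup generated by {aba⁻¹, b, s}. -/
/-!
`K` is the HNN extension of `ℤ² = ⟨b, s⟩` with stable letter `a` and `a (bs) a⁻¹ = s`.

In an HNN extension of an abelian group `G` with `t α t⁻¹ = β`, `α ∉ B` and `β ∉ A`, write
`w = h t^(±1) w'` as a reduced word. If `β w = w β`, Britton's lemma (comparing the heads of
both sides) forces the exponent `+1`, and then `α w' = w' β`; if `α w = w β`, it forces `-1`,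
and then `β w' = w' β`. By induction on the length, the centraliser of `β` is `⟨G, tGt⁻¹⟩`.
In `K` this is `⟨b, s⟩ ⊔ a⟨b, s⟩a⁻¹ = ⟨aba⁻¹, b, s⟩`, because `asa⁻¹ = (aba⁻¹)⁻¹ s`.
-/

open Subgroup Multiplicative

theorem Subgroup.comap_centralizer_singleton_of_injective {G N : Type*} [Group G] [Group N]
    {f : G →* N} (hf : Function.Injective f) (g : G) :
    (centralizer {f g}).comap f = centralizer {g} := by
  ext x
  simp only [mem_comap, mem_centralizer_singleton_iff, ← map_mul, hf.eq_iff]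

def MulEquiv.shear (M : Type*) [CommGroup M] : M × M ≃* M × M where
  toFun p := (p.1 / p.2, p.2)
  invFun p := (p.1 * p.2, p.2)
  left_inv p := by simp
  right_inv p := by simp
  map_mul' p q := by simp [div_mul_div_comm]

namespace HNNExtension.NormalWord.ReducedWord

variable {G : Type*} [Group G] {A B : Subgroup G} {φ : A ≃* B}

theorem exists_prod_eq_prod_mul_of (w : ReducedWord G A B) (hw : w.toList ≠ []) (y : G) :
    ∃ w' : ReducedWord G A B, w'.prod φ = w.prod φ * of y ∧ w'.head = w.head := by
  obtain ⟨h, l, hl⟩ := w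
  obtain ⟨l₀, ⟨u, c⟩, rfl⟩ := List.eq_nil_or_concat' l |>.resolve_left hw
  obtain ⟨hl₀, -, hlast⟩ := List.isChain_append.mp hl
  refine ⟨⟨h, l₀ ++ [(u, c * y)], List.isChain_append.mpr
    ⟨hl₀, List.isChain_singleton _, fun p hp q hq => ?_⟩⟩, ?_, rfl⟩
  · obtain rfl : (u, c * y) = q := by simpa using hq
    exact hlast p hp (u, c) rfl
  · simp [prod, mul_assoc]

theorem conj_mem_toSubgroup_of_of_mul_prod_eq (w : ReducedWord G A B) {u : ℤˣ}
    (hu : u ∈ w.toList.head?.map Prod.fst) {x y : G}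
    (h : of x * w.prod φ = w.prod φ * of y) :
    w.head⁻¹ * x * w.head ∈ toSubgroup A B (-u) := by
  have hw : w.toList ≠ [] := by rintro hw; simp [hw] at hu
  obtain ⟨w', hprod, hhead⟩ := w.exists_prod_eq_prod_mul_of (φ := φ) hw y
  let xw : ReducedWord G A B := ⟨x * w.head, w.toList, w.chain⟩
  have hxw : xw.prod φ = w'.prod φ := by
    rw [hprod, ← h]
    simp [xw, prod, mul_assoc]
  have := (HNNExtension.ReducedWord.map_fst_eq_and_of_prod_eq φ hxw).2 u hu
  rw [hhead, mul_inv_rev, ← inv_mem_iff] at this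
  simpa [mul_assoc] using this

theorem prod_cons (h c : G) (u : ℤˣ) (l : List (ℤˣ × G)) (hl) :
    (⟨h, (u, c) :: l, hl⟩ : ReducedWord G A B).prod φ
      = of h * t ^ (u : ℤ) * (⟨c, l, hl.tail⟩ : ReducedWord G A B).prod φ := by
  simp [ReducedWord.prod, mul_assoc]

end HNNExtension.NormalWord.ReducedWord

namespace HNNExtension

open NormalWord

variable {G : Type*} [CommGroup G] {A B : Subgroup G} {φ : A ≃* B}

variable (G A B φ) in
def baseSupConjBase : Subgroup (HNNExtension G A B φ) :=
  of.range ⊔ ((MulAut.conj t).toMonoidHom.comp of).range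

theorem of_mem_baseSupConjBase (g : G) : of g ∈ baseSupConjBase G A B φ :=
  le_sup_left (a := of.range) ⟨g, rfl⟩

theorem conj_of_mem_baseSupConjBase (g : G) : t * of g * t⁻¹ ∈ baseSupConjBase G A B φ :=
  le_sup_right (a := of.range) ⟨g, rfl⟩

theorem of_mul_of_mul_eq_iff {x h y : G} {g : HNNExtension G A B φ} :
    of x * (of h * g) = of h * g * of y ↔ of x * g = g * of y := by
  rw [← mul_assoc, ← map_mul, mul_comm, map_mul, mul_assoc, mul_assoc, mul_right_inj]

variable {α : A}

theorem NormalWord.ReducedWord.prod_mem_baseSupConjBase (hαB : (α : G) ∉ B) (hβA : (φ α : G) ∉ A)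
    (w : ReducedWord G A B) :
    (of (φ α : G) * w.prod φ = w.prod φ * of (φ α : G) → w.prod φ ∈ baseSupConjBase G A B φ) ∧
      (of (α : G) * w.prod φ = w.prod φ * of (φ α : G) →
        t * w.prod φ ∈ baseSupConjBase G A B φ) := by
  obtain ⟨h, l, hl⟩ := w
  induction l generalizing h with
  | nil =>
    have hprod : (⟨h, [], hl⟩ : ReducedWord G A B).prod φ = of h := by simp [ReducedWord.prod]
    rw [hprod]
    refine ⟨fun _ => of_mem_baseSupConjBase h, fun hαβ => absurd ?_ hαB⟩
    have : (α : G) = φ α := by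
      rw [← map_mul, ← map_mul, mul_comm] at hαβ
      exact mul_left_cancel (of_injective φ hαβ)
    exact this ▸ (φ α).2
  | cons p l ih =>
    obtain ⟨u, c⟩ := p
    have hconj (x : G) := ReducedWord.conj_mem_toSubgroup_of_of_mul_prod_eq
      (⟨h, (u, c) :: l, hl⟩ : ReducedWord G A B) (φ := φ) (u := u) (by simp) (x := x) (y := φ α)
    simp only [inv_mul_cancel_comm] at hconj
    rw [ReducedWord.prod_cons] at hconj ⊢
    set P := (⟨c, l, hl.tail⟩ : ReducedWord G A B).prod φ
    rcases Int.units_eq_one_or u with rfl | rfl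
    · refine ⟨fun hβ => ?_, fun hα => absurd (hconj α hα) hαB⟩
      rw [Units.val_one, zpow_one, mul_assoc, of_mul_of_mul_eq_iff, ← mul_assoc, ← t_mul_of,
        mul_assoc, mul_assoc, mul_right_inj] at hβ
      rw [Units.val_one, zpow_one, mul_assoc]
      exact mul_mem (of_mem_baseSupConjBase h) ((ih c hl.tail).2 hβ)
    · refine ⟨fun hβ => absurd (hconj (φ α) hβ) hβA, fun hα => ?_⟩
      rw [Units.val_neg, Units.val_one, zpow_neg, zpow_one, mul_assoc, of_mul_of_mul_eq_iff,
        ← mul_assoc, of_mul_inv_t, mul_assoc, mul_assoc, mul_right_inj] at hα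
      rw [Units.val_neg, Units.val_one, zpow_neg, zpow_one, ← mul_assoc, ← mul_assoc]
      exact mul_mem (conj_of_mem_baseSupConjBase h) ((ih c hl.tail).1 hα)

theorem centralizer_of_eq_baseSupConjBase (hαB : (α : G) ∉ B) (hβA : (φ α : G) ∉ A) :
    centralizer {of (φ α : G)} = baseSupConjBase G A B φ := by
  apply le_antisymm
  · intro g hg
    obtain ⟨d⟩ := TransversalPair.nonempty G A B
    have hprod : (g • NormalWord.empty : NormalWord d).prod φ = g := by simp
    rw [← hprod]
    exact (ReducedWord.prod_mem_baseSupConjBase hαB hβA _).1 (by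
      rw [hprod]; exact (mem_centralizer_singleton_iff.mp hg).symm)
  · refine sup_le ?_ ?_ <;> rintro _ ⟨g, rfl⟩ <;> rw [mem_centralizer_singleton_iff]
    · rw [← map_mul, ← map_mul, mul_comm]
    · simp only [MonoidHom.comp_apply, MulEquiv.coe_toMonoidHom, MulAut.conj_apply,
        equiv_eq_conj]
      exact (((Commute.all _ _).map of).conj t).eq

end HNNExtension

open HNNExtension

namespace FreeByCyclicK

abbrev K := PresentedGroup relsK

abbrev a : K := PresentedGroup.of GenK.a
abbrev b : K := PresentedGroup.of GenK.b
abbrev s : K := PresentedGroup.of GenK.s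

theorem s_mul_a_mul_s_inv : s * a * s⁻¹ = a * b :=
  PresentedGroup.mk_eq_mk_of_mul_inv_mem (Set.mem_insert _ _)

theorem s_mul_b_mul_s_inv : s * b * s⁻¹ = b :=
  PresentedGroup.mk_eq_mk_of_mul_inv_mem (Set.mem_insert_of_mem _ rfl)

theorem commute_b_s : Commute b s :=
  (mul_inv_eq_iff_eq_mul.mp s_mul_b_mul_s_inv).symm

theorem semiconjBy_a_b_mul_s : SemiconjBy a (b * s) s := by
  rw [SemiconjBy, ← mul_assoc, mul_inv_eq_iff_eq_mul.mp s_mul_a_mul_s_inv]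

abbrev Base := Multiplicative ℤ × Multiplicative ℤ

def b₀ : Base := (ofAdd 1, 1)
def s₀ : Base := (1, ofAdd 1)

def A : Subgroup Base := zpowers (b₀ * s₀)
def B : Subgroup Base := zpowers s₀

theorem shear_b₀_mul_s₀ : MulEquiv.shear _ (b₀ * s₀) = s₀ := by
  simp [MulEquiv.shear, b₀, s₀]

def φ : A ≃* B :=
  ((MulEquiv.shear _).subgroupMap A).trans <| MulEquiv.subgroupCongr <| by
    rw [A, B, MonoidHom.map_zpowers]
    exact congrArg zpowers shear_b₀_mul_s₀

def α : A := ⟨b₀ * s₀, mem_zpowers _⟩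

theorem φ_α : (φ α : Base) = s₀ := shear_b₀_mul_s₀

theorem α_not_mem_B : (α : Base) ∉ B := by
  rintro ⟨k, hk⟩
  simpa [α, b₀, s₀] using congrArg (toAdd ·.1) hk

theorem φ_α_not_mem_A : (φ α : Base) ∉ A := by
  rintro ⟨k, hk⟩
  rw [φ_α] at hk
  have h1 := congrArg (toAdd ·.1) hk
  have h2 := congrArg (toAdd ·.2) hk
  simp [b₀, s₀] at h1 h2
  omega

abbrev Ĝ := HNNExtension Base A B φ

def genImage : GenK → Ĝ
  | .a => t
  | .b => of b₀
  | .s => of s₀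

theorem t_mul_of_b₀_mul_of_s₀ : (t * of b₀ * of s₀ : Ĝ) = of s₀ * t := by
  rw [mul_assoc, ← map_mul, ← φ_α]
  exact t_mul_of α

theorem lift_genImage_relsK : ∀ r ∈ relsK, FreeGroup.lift genImage r = 1 := by
  rintro r (rfl | rfl) <;>
    simp only [map_mul, map_inv, FreeGroup.lift_apply_of, genImage, mul_inv_eq_one]
  · rw [← t_mul_of_b₀_mul_of_s₀, mul_inv_cancel_right]
  · rw [← map_mul, ← map_inv, ← map_mul, mul_inv_cancel_comm]

def toHNN : K →* Ĝ := PresentedGroup.toGroup lift_genImage_relsK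

theorem toHNN_a : toHNN a = t := PresentedGroup.toGroup.of _

theorem toHNN_b : toHNN b = of b₀ := PresentedGroup.toGroup.of _

theorem toHNN_s : toHNN s = of s₀ := PresentedGroup.toGroup.of _

theorem b₀_zpow_mul_s₀_zpow (g : Base) : b₀ ^ toAdd g.1 * s₀ ^ toAdd g.2 = g := by
  ext <;> simp [b₀, s₀]

def baseToK : Base →* K :=
  (zpowersHom K b).noncommCoprod (zpowersHom K s) fun _ _ => commute_b_s.zpow_zpow _ _

theorem baseToK_apply (g : Base) : baseToK g = b ^ toAdd g.1 * s ^ toAdd g.2 := rfl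

theorem baseToK_b₀ : baseToK b₀ = b := by simp [baseToK_apply, b₀]

theorem baseToK_s₀ : baseToK s₀ = s := by simp [baseToK_apply, s₀]

theorem a_mul_baseToK (x : A) : a * baseToK x = baseToK (φ x) * a := by
  obtain ⟨k, hk⟩ := mem_zpowers_iff.mp x.2
  have hφ : (φ x : Base) = s₀ ^ k := by
    rw [← shear_b₀_mul_s₀, ← map_zpow, hk]; rfl
  rw [hφ, ← hk, map_zpow, map_zpow, map_mul, baseToK_b₀, baseToK_s₀]
  exact semiconjBy_a_b_mul_s.zpow_right k

def toK : Ĝ →* K := HNNExtension.lift baseToK a a_mul_baseToK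

theorem toK_t : toK t = a := lift_t _ _ _

theorem toK_of (g : Base) : toK (of g) = baseToK g := lift_of _ _ _ _

def equivHNN : K ≃* Ĝ :=
  MonoidHom.toMulEquiv toHNN toK
    (PresentedGroup.ext fun
      | .a => by simp [toHNN_a, toK_t]
      | .b => by simp [toHNN_b, toK_of, baseToK_b₀]
      | .s => by simp [toHNN_s, toK_of, baseToK_s₀])
    (HNNExtension.hom_ext
      (MonoidHom.ext fun g => by
        change toHNN (toK (of g)) = of g
        rw [toK_of, baseToK_apply, map_mul, map_zpow, map_zpow, toHNN_b, toHNN_s, ← map_zpow,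
          ← map_zpow, ← map_mul, b₀_zpow_mul_s₀_zpow])
      (by simp [toK_t, toHNN_a]))

theorem map_toK_baseSupConjBase :
    (baseSupConjBase Base A B φ).map toK =
      baseToK.range ⊔ ((MulAut.conj a).toMonoidHom.comp baseToK).range := by
  rw [baseSupConjBase, Subgroup.map_sup, MonoidHom.map_range, MonoidHom.map_range]
  rfl

theorem range_baseToK_sup_conj :
    baseToK.range ⊔ ((MulAut.conj a).toMonoidHom.comp baseToK).range =
      closure {a * b * a⁻¹, b, s} := by
  have hb : b ∈ closure {a * b * a⁻¹, b, s} := subset_closure (by simp)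
  have hs : s ∈ closure {a * b * a⁻¹, b, s} := subset_closure (by simp)
  have haba : a * b * a⁻¹ ∈ closure {a * b * a⁻¹, b, s} := subset_closure (by simp)
  have hasa : a * s * a⁻¹ = (a * b * a⁻¹)⁻¹ * s := by
    refine eq_inv_mul_of_mul_eq ?_
    rw [show a * b * a⁻¹ * (a * s * a⁻¹) = a * (b * s) * a⁻¹ by group, semiconjBy_a_b_mul_s.eq,
      mul_inv_cancel_right]
  apply le_antisymm
  · refine sup_le ?_ ?_ <;> rintro _ ⟨g, rfl⟩
    · exact mul_mem (zpow_mem hb _) (zpow_mem hs _)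
    · simp only [MonoidHom.comp_apply, MulEquiv.coe_toMonoidHom, baseToK_apply, map_mul,
        map_zpow, MulAut.conj_apply, hasa]
      exact mul_mem (zpow_mem haba _) (zpow_mem (mul_mem (inv_mem haba) hs) _)
  · rw [closure_le]
    rintro _ (rfl | rfl | rfl)
    · exact le_sup_right (a := baseToK.range) ⟨b₀, by simp [baseToK_b₀]⟩
    · exact le_sup_left (a := baseToK.range) ⟨b₀, baseToK_b₀⟩
    · exact le_sup_left (a := baseToK.range) ⟨s₀, baseToK_s₀⟩

end FreeByCyclicK

open FreeByCyclicK

/-- The centraliser of `s` in `K` is the subgroup generated by `{aba⁻¹, b, s}`. -/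
theorem centralizer_s_in_K :
    Subgroup.centralizer {(PresentedGroup.of GenK.s : PresentedGroup relsK)} =
      Subgroup.closure
        {PresentedGroup.of GenK.a * PresentedGroup.of GenK.b *
            (PresentedGroup.of GenK.a)⁻¹,
          PresentedGroup.of GenK.b, PresentedGroup.of GenK.s} := by
  have hs : equivHNN s = of (φ α : Base) := by rw [φ_α]; exact toHNN_s
  calc centralizer {s}
      = (centralizer {of (φ α : Base)}).comap equivHNN.toMonoidHom := by
        rw [← hs]
        exact (comap_centralizer_singleton_of_injective equivHNN.injective s).symm
    _ = (baseSupConjBase Base A B φ).map toK := by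
        rw [centralizer_of_eq_baseSupConjBase α_not_mem_B φ_α_not_mem_A,
          comap_equiv_eq_map_symm']
        rfl
    _ = closure {a * b * a⁻¹, b, s} := by
        rw [map_toK_baseSupConjBase, range_baseToK_sup_conj]
end

section
/- Let A(P₃) = ⟨a, b, c | ab = ba, bc = cb⟩ and let e_a : A(P₃) → ℤ be the homomorphism determined by e_a(a) = 1, e_a(b) = 0, e_a(c) = 0. Then the subgroup of A(P₃) generated by {ab, c} equals the set {u · b^(e_a(u)) : u ∈ ⟨a, c⟩}, where ⟨a, c⟩ is the subgroup generated by a and c. -/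
open scoped commutatorElement

/-- Generators of `A(P₃) = ⟨a, b, c | ab = ba, bc = cb⟩`. -/
inductive GenA
  | a | b | c

/-- Relators of `A(P₃) = ⟨a, b, c | ab = ba, bc = cb⟩`. -/
def relsA : Set (FreeGroup GenA) :=
  { ⁅FreeGroup.of GenA.a, FreeGroup.of GenA.b⁆,
    ⁅FreeGroup.of GenA.b, FreeGroup.of GenA.c⁆ }

/-!
Since `b` is central, twisting by it, `u ↦ u * b ^ (e_a u)`, is an endomorphism of `A(P₃)`.
It sends `a ↦ ab` and fixes `c`, so it maps `⟨a, c⟩` onto `⟨ab, c⟩`.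
-/

section Twist

variable {G : Type*} [Group G]

def twistByCentral (φ : G →* Multiplicative ℤ) {z : G} (hz : z ∈ Subgroup.center G) : G →* G where
  toFun g := g * z ^ (φ g).toAdd
  map_one' := by simp
  map_mul' g h := by
    have hcomm : Commute h (z ^ (φ g).toAdd) :=
      Commute.zpow_right (Subgroup.mem_center_iff.mp hz h) _
    rw [map_mul, toAdd_mul, zpow_add, mul_assoc g, ← mul_assoc h, hcomm.eq]
    group

theorem twistByCentral_apply (φ : G →* Multiplicative ℤ) {z : G} (hz : z ∈ Subgroup.center G)
    (g : G) : twistByCentral φ hz g = g * z ^ (φ g).toAdd :=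
  rfl

theorem coe_closure_image_twistByCentral (φ : G →* Multiplicative ℤ) {z : G}
    (hz : z ∈ Subgroup.center G) (s : Set G) :
    (Subgroup.closure (twistByCentral φ hz '' s) : Set G) =
      {w | ∃ u ∈ Subgroup.closure s, w = u * z ^ (φ u).toAdd} := by
  rw [← MonoidHom.map_closure, Subgroup.coe_map]
  ext w
  simp only [Set.mem_image, SetLike.mem_coe, Set.mem_ofPred_eq, twistByCentral_apply, eq_comm]

end Twist

namespace RAAGPathThree

local notation "A" => PresentedGroup relsA

local notation "gen" => (PresentedGroup.of : GenA → A)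

theorem commute_of_commutator_mem_relsA {x y : GenA}
    (h : ⁅FreeGroup.of x, FreeGroup.of y⁆ ∈ relsA) : Commute (gen x) (gen y) := by
  have := PresentedGroup.one_of_mem h
  rw [map_commutatorElement] at this
  exact commutatorElement_eq_one_iff_commute.mp this

theorem b_mem_center : gen GenA.b ∈ Subgroup.center A := by
  refine Subgroup.mem_center_iff.mpr fun g ↦ ?_
  refine Subgroup.mem_centralizer_singleton_iff.mp
    (PresentedGroup.generated_by relsA _ (fun x ↦ ?_) g)
  rw [Subgroup.mem_centralizer_singleton_iff]
  cases x with
  | a => exact (commute_of_commutator_mem_relsA (Or.inl rfl)).eq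
  | b => rfl
  | c => exact (commute_of_commutator_mem_relsA (Or.inr rfl)).eq.symm

def expSumAOnGen : GenA → Multiplicative ℤ
  | .a => Multiplicative.ofAdd 1
  | .b => 1
  | .c => 1

theorem lift_expSumAOnGen_relsA : ∀ r ∈ relsA, FreeGroup.lift expSumAOnGen r = 1 := by
  rintro r (rfl | rfl) <;>
  · rw [map_commutatorElement]
    exact commutatorElement_eq_one_iff_commute.mpr (Commute.all _ _)

/-- The exponent sum `e_a` in the generator `a`. -/
def expSumA : A →* Multiplicative ℤ :=
  PresentedGroup.toGroup lift_expSumAOnGen_relsA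

theorem expSumA_of (x : GenA) : expSumA (gen x) = expSumAOnGen x :=
  PresentedGroup.toGroup.of lift_expSumAOnGen_relsA

end RAAGPathThree

open RAAGPathThree in
/-- There is an exponent-sum homomorphism `e_a : A(P₃) → ℤ` (written additively,
i.e. a homomorphism to `Multiplicative ℤ`) with `e_a(a) = 1`, `e_a(b) = e_a(c) = 0`,
and `⟨ab, c⟩ = {u · b^(e_a u) : u ∈ ⟨a, c⟩}`. -/
theorem closure_ab_c_eq :
    ∃ ea : PresentedGroup relsA →* Multiplicative ℤ,
      ea (PresentedGroup.of GenA.a) = Multiplicative.ofAdd 1 ∧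
      ea (PresentedGroup.of GenA.b) = 1 ∧
      ea (PresentedGroup.of GenA.c) = 1 ∧
      (↑(Subgroup.closure
          {PresentedGroup.of GenA.a * PresentedGroup.of GenA.b,
            PresentedGroup.of GenA.c} : Subgroup (PresentedGroup relsA)) :
          Set (PresentedGroup relsA)) =
        { w | ∃ u ∈ Subgroup.closure
              ({PresentedGroup.of GenA.a, PresentedGroup.of GenA.c} :
                Set (PresentedGroup relsA)),
            w = u * (PresentedGroup.of GenA.b) ^ (Multiplicative.toAdd (ea u)) } := by
  refine ⟨expSumA, expSumA_of _, expSumA_of _, expSumA_of _, ?_⟩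
  rw [← coe_closure_image_twistByCentral expSumA b_mem_center, Set.image_pair,
    twistByCentral_apply, twistByCentral_apply, expSumA_of, expSumA_of]
  simp [expSumAOnGen]
end

section
/- Let G = ⟨c, q | c(qcq⁻¹) = (qcq⁻¹)c⟩, for each i ∈ ℤ set cᵢ = qⁱ c q⁻ⁱ, and let H = ⟨c₀, c₂, c₄c₅, c₆, c₈, c₉c₁₀⟩ be the subgroup of G generated by the six elements c₀, c₂, c₄c₅, c₆, c₈ and c₉c₁₀. Then H is isomorphic to the free group of rank 6. -/
/-- The subgroup `H = ⟨c₀, c₂, c₄c₅, c₆, c₈, c₉c₁₀⟩` of `G`. -/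
def Hsub : Subgroup (PresentedGroup relsG) :=
  Subgroup.closure
    {cElt 0, cElt 2, cElt 4 * cElt 5, cElt 6, cElt 8, cElt 9 * cElt 10}

/-! The group `G` maps to `(F × F) ⋊ ℤ`, where `F` is free on `xₖ` (`k ∈ ℤ`) and the generator `t`
of `ℤ` acts by `(u, v) ↦ (τ v, u)` with `τ` the shift `xₖ ↦ xₖ₊₁`: send `c ↦ (x₀, 1)` and `q ↦ t`.
Then `c₂ₖ ↦ (xₖ, 1)` and `c₂ₖ₊₁ ↦ (1, xₖ)`, so `c` and `c₁` land in different factors and the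
relation holds. The generators of `H` go to `(x₀, 1), (x₁, 1), (x₂, x₂), (x₃, 1), (x₄, 1), (x₅, x₄)`,
whose first coordinates are six distinct free generators; hence they satisfy no relation. -/

namespace FreeGroup

variable {α : Type*} {G H : Type*} [Group G] [Group H]

theorem comp_lift (φ : G →* H) (f : α → G) : φ.comp (lift f) = lift (φ ∘ f) :=
  ext_hom _ _ fun _ => by simp

theorem lift_injective_of_comp (φ : G →* H) {f : α → G}
    (hf : Function.Injective (lift (φ ∘ f))) : Function.Injective (lift f) := by
  rw [← comp_lift, MonoidHom.coe_comp] at hf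
  exact hf.of_comp

noncomputable def closureRangeEquiv (f : α → G) (hf : Function.Injective (lift f)) :
    Subgroup.closure (Set.range f) ≃* FreeGroup α :=
  (MulEquiv.subgroupCongr (range_lift_eq_closure (f := f))).symm.trans
    (MonoidHom.ofInjective hf).symm

end FreeGroup

namespace BurnsKarrassSolitar

open SemidirectProduct
open FreeGroup (of)

def shiftAut : FreeGroup ℤ ≃* FreeGroup ℤ := FreeGroup.freeGroupCongr (Equiv.addRight 1)

def swapShiftAut : (FreeGroup ℤ × FreeGroup ℤ) ≃* (FreeGroup ℤ × FreeGroup ℤ) :=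
  MulEquiv.prodComm.trans (shiftAut.prodCongr (MulEquiv.refl _))

theorem swapShiftAut_apply (u v : FreeGroup ℤ) : swapShiftAut (u, v) = (shiftAut v, u) := rfl

theorem shiftAut_of (k : ℤ) : shiftAut (of k) = of (k + 1) := by
  simp [shiftAut]

theorem swapShiftAut_sq_of_one (k : ℤ) : (swapShiftAut ^ 2) (of k, 1) = (of (k + 1), 1) := by
  rw [sq, MulAut.mul_apply, swapShiftAut_apply, swapShiftAut_apply, map_one, shiftAut_of]

theorem swapShiftAut_zpow_two_mul (k : ℤ) :
    (swapShiftAut ^ (2 * k)) (of 0, 1) = (of k, 1) := by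
  induction k using Int.induction_on with
  | zero => simp
  | succ k ih =>
    rw [mul_add, mul_one, add_comm, zpow_add, MulAut.mul_apply, ih, zpow_two, ← sq,
      swapShiftAut_sq_of_one]
  | pred k ih =>
    apply (swapShiftAut ^ 2).injective
    rw [swapShiftAut_sq_of_one, sub_add_cancel, ← ih, ← MulAut.mul_apply, ← zpow_natCast,
      ← zpow_add]
    congr 2
    push_cast
    ring

theorem swapShiftAut_zpow_two_mul_add_one (k : ℤ) :
    (swapShiftAut ^ (2 * k + 1)) (of 0, 1) = (1, of k) := by
  rw [add_comm, zpow_add, zpow_one, MulAut.mul_apply, swapShiftAut_zpow_two_mul,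
    swapShiftAut_apply, map_one]

abbrev Model := (FreeGroup ℤ × FreeGroup ℤ) ⋊[zpowersHom _ swapShiftAut] Multiplicative ℤ

theorem inr_mul_inl_mul_inr_inv (i : ℤ) (n : FreeGroup ℤ × FreeGroup ℤ) :
    (inr (.ofAdd i) : Model) * inl n * (inr (.ofAdd i))⁻¹ = inl ((swapShiftAut ^ i) n) := by
  rw [← map_inv, ← inl_aut]
  rfl

def genImage : GenG → Model
  | .c => inl (of 0, 1)
  | .q => inr (.ofAdd 1)

theorem lift_genImage_relsG : ∀ r ∈ relsG, FreeGroup.lift genImage r = 1 := by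
  rintro r rfl
  have hconj : (inr (.ofAdd 1) : Model) * inl (of 0, 1) * (inr (.ofAdd 1))⁻¹ = inl (1, of 0) :=
    inr_mul_inl_mul_inr_inv 1 _
  have hcomm : ((of 0, 1) : FreeGroup ℤ × FreeGroup ℤ) * (1, of 0) = (1, of 0) * (of 0, 1) :=
    Prod.ext (by simp) (by simp)
  simp only [map_mul, map_inv, FreeGroup.lift_apply_of, genImage, hconj]
  rw [mul_inv_eq_one, ← map_mul, ← map_mul, hcomm]

noncomputable def toModel : PresentedGroup relsG →* Model :=
  PresentedGroup.toGroup lift_genImage_relsG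

theorem toModel_cElt (i : ℤ) : toModel (cElt i) = inl ((swapShiftAut ^ i) (of 0, 1)) := by
  have hq : toModel (PresentedGroup.of GenG.q ^ i) = inr (.ofAdd i) := by
    rw [map_zpow, toModel, PresentedGroup.toGroup.of, genImage, ← map_zpow, ← ofAdd_zsmul,
      smul_eq_mul, mul_one]
  rw [cElt, zpow_neg, map_mul, map_mul, map_inv, hq, toModel, PresentedGroup.toGroup.of]
  exact inr_mul_inl_mul_inr_inv i _

theorem toModel_cElt_two_mul (k : ℤ) : toModel (cElt (2 * k)) = inl (of k, 1) := by
  rw [toModel_cElt, swapShiftAut_zpow_two_mul]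

theorem toModel_cElt_two_mul_add_one (k : ℤ) : toModel (cElt (2 * k + 1)) = inl (1, of k) := by
  rw [toModel_cElt, swapShiftAut_zpow_two_mul_add_one]

theorem toModel_cElt_two_mul_mul_succ (k : ℤ) :
    toModel (cElt (2 * k) * cElt (2 * k + 1)) = inl (of k, of k) := by
  rw [map_mul, toModel_cElt_two_mul, toModel_cElt_two_mul_add_one, ← map_mul, Prod.mk_mul_mk,
    mul_one, one_mul]

theorem toModel_cElt_two_mul_add_one_mul_succ (k : ℤ) :
    toModel (cElt (2 * k + 1) * cElt (2 * (k + 1))) = inl (of (k + 1), of k) := by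
  rw [map_mul, toModel_cElt_two_mul, toModel_cElt_two_mul_add_one, ← map_mul, Prod.mk_mul_mk,
    mul_one, one_mul]

def hsubGen : Fin 6 → PresentedGroup relsG :=
  ![cElt 0, cElt 2, cElt 4 * cElt 5, cElt 6, cElt 8, cElt 9 * cElt 10]

def hsubGenImage : Fin 6 → FreeGroup ℤ × FreeGroup ℤ :=
  ![(of 0, 1), (of 1, 1), (of 2, of 2), (of 3, 1), (of 4, 1), (of 5, of 4)]

theorem hsub_eq_closure_range : Hsub = Subgroup.closure (Set.range hsubGen) := by
  simp only [Hsub, hsubGen, Matrix.range_cons, Matrix.range_empty, Set.union_empty,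
    Set.singleton_union]

theorem toModel_comp_hsubGen : toModel ∘ hsubGen = inl ∘ hsubGenImage := by
  have h0 := toModel_cElt_two_mul 0
  have h2 := toModel_cElt_two_mul 1
  have h45 := toModel_cElt_two_mul_mul_succ 2
  have h6 := toModel_cElt_two_mul 3
  have h8 := toModel_cElt_two_mul 4
  have h910 := toModel_cElt_two_mul_add_one_mul_succ 4
  norm_num at h0 h2 h45 h6 h8 h910
  funext i
  fin_cases i <;> assumption

theorem lift_hsubGenImage_injective : Function.Injective (FreeGroup.lift hsubGenImage) := by
  apply FreeGroup.lift_injective_of_comp (MonoidHom.fst _ _)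
  have hfst : MonoidHom.fst _ _ ∘ hsubGenImage = of ∘ fun i : Fin 6 => (i : ℤ) := by
    funext i
    fin_cases i <;> rfl
  rw [hfst, ← FreeGroup.map_eq_lift]
  exact FreeGroup.map_injective (Nat.cast_injective.comp Fin.val_injective)

theorem lift_hsubGen_injective : Function.Injective (FreeGroup.lift hsubGen) := by
  apply FreeGroup.lift_injective_of_comp toModel
  rw [toModel_comp_hsubGen, ← FreeGroup.comp_lift, MonoidHom.coe_comp]
  exact inl_injective.comp lift_hsubGenImage_injective

end BurnsKarrassSolitar

open BurnsKarrassSolitar in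
/-- `H = ⟨c₀, c₂, c₄c₅, c₆, c₈, c₉c₁₀⟩` is isomorphic to the free group of rank 6. -/
theorem Hsub_free_of_rank_six :
    Nonempty (Hsub ≃* FreeGroup (Fin 6)) := by
  rw [hsub_eq_closure_range]
  exact ⟨FreeGroup.closureRangeEquiv hsubGen lift_hsubGen_injective⟩
end
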